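/- Fix n ≥ 1 and a natural number m, and let f : ℂⁿ → ℂ be given by f(z) = conj(z₁)^m·(1 − ‖z‖²)^{−m}. Then for every z in the open unit ball Bₙ and every index j, ∂_{z_j} f(z) = conj(z_j)·Σ_k conj(z_k)·∂_{z̄_k} f(z). -/

import Mathlib

open Complex

/-- Wirtinger partial derivative `∂_{z_j}f(z) = (1/2)(L(e_j) − i·L(i·e_j))`,
`L = fderiv ℝ f z`, on `ℂⁿ`. -/
noncomputable def wirtingerPartial (n : ℕ) (f : EuclideanSpace ℂ (Fin n) → ℂ)
    (z : EuclideanSpace ℂ (Fin n)) (j : Fin n) : ℂ :=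
  (1 / 2) * ((fderiv ℝ f z) (EuclideanSpace.single j 1)
    - Complex.I * (fderiv ℝ f z) (EuclideanSpace.single j Complex.I))

/-- Wirtinger partial derivative `∂_{z̄_j}f(z) = (1/2)(L(e_j) + i·L(i·e_j))`,
`L = fderiv ℝ f z`, on `ℂⁿ`. -/
noncomputable def wirtingerPartialBar (n : ℕ) (f : EuclideanSpace ℂ (Fin n) → ℂ)
    (z : EuclideanSpace ℂ (Fin n)) (j : Fin n) : ℂ :=
  (1 / 2) * ((fderiv ℝ f z) (EuclideanSpace.single j 1)
    + Complex.I * (fderiv ℝ f z) (EuclideanSpace.single j Complex.I))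

noncomputable def projR (n : ℕ) (k : Fin n) : EuclideanSpace ℂ (Fin n) →L[ℝ] ℂ :=
  (EuclideanSpace.proj k).restrictScalars ℝ

noncomputable def derivCLM (n : ℕ) (hn : 0 < n) (m : ℕ) (z : EuclideanSpace ℂ (Fin n)) :
    EuclideanSpace ℂ (Fin n) →L[ℝ] ℂ :=
  ((starRingEnd ℂ) (z ⟨0, hn⟩) ^ m) •
      (((((-(m : ℤ)) : ℤ) : ℂ) * ((1 - ‖z‖ ^ 2 : ℝ) : ℂ) ^ (-(m : ℤ) - 1)) •
        (Complex.ofRealCLM.comp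
          (-(∑ k, 2 • ((innerSL ℝ (z k)).comp (projR n k))))))
    + (((1 - ‖z‖ ^ 2 : ℝ) : ℂ) ^ (-(m : ℤ))) •
      (((m : ℂ) * (starRingEnd ℂ) (z ⟨0, hn⟩) ^ (m - 1)) •
        (Complex.conjCLE.toContinuousLinearMap.comp (projR n ⟨0, hn⟩)))

lemma normsq_eq {n : ℕ} (w : EuclideanSpace ℂ (Fin n)) : ‖w‖ ^ 2 = ∑ k, ‖w k‖ ^ 2 := by
  rw [EuclideanSpace.norm_eq, Real.sq_sqrt]
  positivity

lemma hasFDeriv_f (n : ℕ) (hn : 0 < n) (m : ℕ) (z : EuclideanSpace ℂ (Fin n))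
    (hz : ‖z‖ < 1) :
    HasFDerivAt
      (fun w => ((starRingEnd ℂ) (w ⟨0, hn⟩)) ^ m * ((1 - ‖w‖ ^ 2 : ℝ) : ℂ) ^ (-(m : ℤ)))
      (derivCLM n hn m z) z := by
  have ht : (0 : ℝ) < 1 - ‖z‖ ^ 2 := by nlinarith [norm_nonneg z]
  have htC : ((1 - ‖z‖ ^ 2 : ℝ) : ℂ) ≠ 0 := by exact_mod_cast ht.ne'
  have hB : HasFDerivAt (fun w : EuclideanSpace ℂ (Fin n) => ∑ k, ‖w k‖ ^ 2)
      (∑ k, 2 • ((innerSL ℝ (z k)).comp (projR n k))) z :=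
    HasFDerivAt.fun_sum fun k _ => ((projR n k).hasFDerivAt).norm_sq
  have hn2 : HasFDerivAt (fun w : EuclideanSpace ℂ (Fin n) => ‖w‖ ^ 2)
      (∑ k, 2 • ((innerSL ℝ (z k)).comp (projR n k))) z := by
    simpa only [← normsq_eq] using hB
  have hu : HasFDerivAt (fun w : EuclideanSpace ℂ (Fin n) => (1 : ℝ) - ‖w‖ ^ 2)
      (-(∑ k, 2 • ((innerSL ℝ (z k)).comp (projR n k)))) z := hn2.const_sub 1
  have huC : HasFDerivAt (fun w : EuclideanSpace ℂ (Fin n) => ((1 - ‖w‖ ^ 2 : ℝ) : ℂ))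
      (Complex.ofRealCLM.comp (-(∑ k, 2 • ((innerSL ℝ (z k)).comp (projR n k))))) z :=
    Complex.ofRealCLM.hasFDerivAt.comp z hu
  have hzpow : HasFDerivAt
      (fun w : EuclideanSpace ℂ (Fin n) => ((1 - ‖w‖ ^ 2 : ℝ) : ℂ) ^ (-(m : ℤ)))
      (((((-(m : ℤ)) : ℤ) : ℂ) * ((1 - ‖z‖ ^ 2 : ℝ) : ℂ) ^ (-(m : ℤ) - 1)) •
        (Complex.ofRealCLM.comp (-(∑ k, 2 • ((innerSL ℝ (z k)).comp (projR n k)))))) z := by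
    have := (hasDerivAt_zpow (-(m : ℤ)) _ (Or.inl htC)).comp_hasFDerivAt z huC
    exact this
  have hA : HasFDerivAt (fun w : EuclideanSpace ℂ (Fin n) => (starRingEnd ℂ) (w ⟨0, hn⟩))
      (Complex.conjCLE.toContinuousLinearMap.comp (projR n ⟨0, hn⟩)) z := by
    have h := (Complex.conjCLE.toContinuousLinearMap.comp (projR n ⟨0, hn⟩)).hasFDerivAt (x := z)
    convert h using 2
    rfl
  have hApow : HasFDerivAt
      (fun w : EuclideanSpace ℂ (Fin n) => (starRingEnd ℂ) (w ⟨0, hn⟩) ^ m)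
      (((m : ℂ) * (starRingEnd ℂ) (z ⟨0, hn⟩) ^ (m - 1)) •
        (Complex.conjCLE.toContinuousLinearMap.comp (projR n ⟨0, hn⟩))) z := by
    have := (hasDerivAt_pow m ((starRingEnd ℂ) (z ⟨0, hn⟩))).comp_hasFDerivAt z hA
    exact this
  exact hApow.mul hzpow

lemma derivCLM_apply (n : ℕ) (hn : 0 < n) (m : ℕ) (z : EuclideanSpace ℂ (Fin n))
    (j : Fin n) (a : ℂ) :
    derivCLM n hn m z (EuclideanSpace.single j a)
      = (m : ℂ) * (starRingEnd ℂ) (z ⟨0, hn⟩) ^ m * ((1 - ‖z‖ ^ 2 : ℝ) : ℂ) ^ (-(m : ℤ) - 1)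
          * ((starRingEnd ℂ) (z j) * a + z j * (starRingEnd ℂ) a)
        + (if j = ⟨0, hn⟩ then
            (m : ℂ) * (starRingEnd ℂ) (z ⟨0, hn⟩) ^ (m - 1) * ((1 - ‖z‖ ^ 2 : ℝ) : ℂ) ^ (-(m : ℤ))
              * (starRingEnd ℂ) a
          else 0) := by
  simp only [derivCLM, ContinuousLinearMap.add_apply, ContinuousLinearMap.smul_apply,
    ContinuousLinearMap.comp_apply, ContinuousLinearMap.neg_apply, ContinuousLinearMap.coe_sum',
    Finset.sum_apply, ContinuousLinearMap.coe_smul', Pi.smul_apply, innerSL_apply_apply, projR,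
    ContinuousLinearMap.coe_restrictScalars', PiLp.proj_apply,
    EuclideanSpace.single_apply, Complex.ofRealCLM_apply, ContinuousLinearEquiv.coe_coe,
    Complex.conjCLE_apply]
  have hx : ∀ x : Fin n, (inner ℝ (z x) (if x = j then a else 0) : ℝ)
      = if x = j then ((starRingEnd ℂ) (z j) * a).re else 0 := by
    intro x; split
    · next h => subst h; simp [Complex.inner]; ring
    · simp
  simp only [hx, smul_ite, smul_zero, Finset.sum_ite_eq', Finset.mem_univ, if_true,
    smul_eq_mul, nsmul_eq_mul, Nat.cast_ofNat]
  rcases eq_or_ne j ⟨0, hn⟩ with h | h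
  · subst h
    simp only [if_pos rfl, map_mul, Complex.conj_conj]
    set T : ℂ := ((1 - ‖z‖ ^ 2 : ℝ) : ℂ) ^ (-(m : ℤ) - 1) with hT
    push_cast
    have key : (starRingEnd ℂ) (z ⟨0, hn⟩) * a + z ⟨0, hn⟩ * (starRingEnd ℂ) a
        = 2 * (((((starRingEnd ℂ) (z ⟨0, hn⟩) * a).re : ℝ)) : ℂ) := by
      simpa [map_mul] using Complex.add_conj ((starRingEnd ℂ) (z ⟨0, hn⟩) * a)
    linear_combination (-(m : ℂ) * (starRingEnd ℂ) (z ⟨0, hn⟩) ^ m * T) * key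
  · simp only [if_neg h, if_neg (Ne.symm h), map_zero, mul_zero, smul_zero, add_zero, map_mul,
      Complex.conj_conj]
    set T : ℂ := ((1 - ‖z‖ ^ 2 : ℝ) : ℂ) ^ (-(m : ℤ) - 1) with hT
    push_cast
    have key : (starRingEnd ℂ) (z j) * a + z j * (starRingEnd ℂ) a
        = 2 * (((((starRingEnd ℂ) (z j) * a).re : ℝ)) : ℂ) := by
      simpa [map_mul] using Complex.add_conj ((starRingEnd ℂ) (z j) * a)
    linear_combination (-(m : ℂ) * (starRingEnd ℂ) (z ⟨0, hn⟩) ^ m * T) * key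

/-- The highest weight vector `f(z) = conj(z₁)^m·(1−‖z‖²)^{−m}` on the open unit ball of
`ℂⁿ` satisfies `∂_{z_j} f(z) = conj(z_j)·Σ_k conj(z_k)·∂_{z̄_k} f(z)`. -/
theorem highestWeightVector_annihilated_unitBall (n : ℕ) (hn : 0 < n) (m : ℕ)
    (z : EuclideanSpace ℂ (Fin n)) (hz : z ∈ Metric.ball (0 : EuclideanSpace ℂ (Fin n)) 1)
    (j : Fin n) :
    wirtingerPartial n
        (fun w => ((starRingEnd ℂ) (w ⟨0, hn⟩)) ^ m * ((1 - ‖w‖ ^ 2 : ℝ) : ℂ) ^ (-(m : ℤ))) z j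
      = (starRingEnd ℂ) (z j)
        * ∑ k, (starRingEnd ℂ) (z k)
          * wirtingerPartialBar n
              (fun w => ((starRingEnd ℂ) (w ⟨0, hn⟩)) ^ m
                * ((1 - ‖w‖ ^ 2 : ℝ) : ℂ) ^ (-(m : ℤ))) z k := by
  have hz1 : ‖z‖ < 1 := by simpa using mem_ball_zero_iff.mp hz
  have ht : (0 : ℝ) < 1 - ‖z‖ ^ 2 := by nlinarith [norm_nonneg z]
  have htC : ((1 - ‖z‖ ^ 2 : ℝ) : ℂ) ≠ 0 := by exact_mod_cast ht.ne'
  have hfd : fderiv ℝ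
      (fun w => ((starRingEnd ℂ) (w ⟨0, hn⟩)) ^ m * ((1 - ‖w‖ ^ 2 : ℝ) : ℂ) ^ (-(m : ℤ))) z
      = derivCLM n hn m z := (hasFDeriv_f n hn m z hz1).fderiv
  set M : ℂ := (starRingEnd ℂ) (z ⟨0, hn⟩) ^ m with hM
  set C : ℂ := (starRingEnd ℂ) (z ⟨0, hn⟩) ^ (m - 1) with hC
  set T1 : ℂ := ((1 - ‖z‖ ^ 2 : ℝ) : ℂ) ^ (-(m : ℤ) - 1) with hT1
  set T0 : ℂ := ((1 - ‖z‖ ^ 2 : ℝ) : ℂ) ^ (-(m : ℤ)) with hT0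
  have hpar : wirtingerPartial n
      (fun w => ((starRingEnd ℂ) (w ⟨0, hn⟩)) ^ m * ((1 - ‖w‖ ^ 2 : ℝ) : ℂ) ^ (-(m : ℤ))) z j
      = (m : ℂ) * M * T1 * (starRingEnd ℂ) (z j) := by
    rw [wirtingerPartial, hfd, derivCLM_apply, derivCLM_apply]
    rcases eq_or_ne j ⟨0, hn⟩ with h | h
    · simp only [if_pos h, map_one, Complex.conj_I, mul_one]
      linear_combination ((1 / 2 : ℂ) * (-(m : ℂ) * M * T1 * (starRingEnd ℂ) (z j)
        + (m : ℂ) * M * T1 * z j + (m : ℂ) * C * T0)) * Complex.I_sq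
    · simp only [if_neg h, map_one, Complex.conj_I, mul_one, add_zero]
      linear_combination ((1 / 2 : ℂ) * (-(m : ℂ) * M * T1 * (starRingEnd ℂ) (z j)
        + (m : ℂ) * M * T1 * z j)) * Complex.I_sq
  have hbar : ∀ k, wirtingerPartialBar n
      (fun w => ((starRingEnd ℂ) (w ⟨0, hn⟩)) ^ m * ((1 - ‖w‖ ^ 2 : ℝ) : ℂ) ^ (-(m : ℤ))) z k
      = (if k = ⟨0, hn⟩ then (m : ℂ) * C * T0 else 0) + (m : ℂ) * M * T1 * z k := by
    intro k
    rw [wirtingerPartialBar, hfd, derivCLM_apply, derivCLM_apply]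
    rcases eq_or_ne k ⟨0, hn⟩ with h | h
    · simp only [if_pos h, map_one, Complex.conj_I, mul_one]
      linear_combination ((1 / 2 : ℂ) * ((m : ℂ) * M * T1 * (starRingEnd ℂ) (z k)
        - (m : ℂ) * M * T1 * z k - (m : ℂ) * C * T0)) * Complex.I_sq
    · simp only [if_neg h, map_one, Complex.conj_I, mul_one, add_zero]
      linear_combination ((1 / 2 : ℂ) * ((m : ℂ) * M * T1 * (starRingEnd ℂ) (z k)
        - (m : ℂ) * M * T1 * z k)) * Complex.I_sq
  rw [hpar]
  simp only [hbar, mul_add, Finset.sum_add_distrib, mul_ite, mul_zero, Finset.sum_ite_eq',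
    Finset.mem_univ, if_true]
  have hsum : ∑ k, (starRingEnd ℂ) (z k) * ((m : ℂ) * M * T1 * z k)
      = (m : ℂ) * M * T1 * ((‖z‖ ^ 2 : ℝ) : ℂ) := by
    have h1 : ∀ k, (starRingEnd ℂ) (z k) * ((m : ℂ) * M * T1 * z k)
        = (m : ℂ) * M * T1 * ((‖z k‖ ^ 2 : ℝ) : ℂ) := by
      intro k
      have : z k * (starRingEnd ℂ) (z k) = ((‖z k‖ ^ 2 : ℝ) : ℂ) := by
        rw [Complex.mul_conj]
        norm_cast
        rw [Complex.normSq_eq_norm_sq]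
      linear_combination (m : ℂ) * M * T1 * this
    rw [Finset.sum_congr rfl fun k _ => h1 k, ← Finset.mul_sum]
    congr 1
    push_cast [normsq_eq z]
    rfl
  rw [hsum]
  rcases Nat.eq_zero_or_pos m with hm | hm
  · simp [hm]
  have hMC : (starRingEnd ℂ) (z ⟨0, hn⟩) * C = M := by
    rw [hC, hM, ← pow_succ', Nat.sub_add_cancel hm]
  have hTT : T0 = T1 * ((1 - ‖z‖ ^ 2 : ℝ) : ℂ) := by
    rw [hT0, hT1, ← zpow_add_one₀ htC]
    congr 1
    ring
  have hcast : ((‖z‖ ^ 2 : ℝ) : ℂ) = 1 - ((1 - ‖z‖ ^ 2 : ℝ) : ℂ) := by push_cast; ring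
  rw [hTT, hcast]
  linear_combination (-(m : ℂ) * T1 * ((1 - ‖z‖ ^ 2 : ℝ) : ℂ) * (starRingEnd ℂ) (z j)) * hMC
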